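/- Let m ∈ ℝ, σ > 0, r > 0, x > 0, S > 0 and set q := √(m² + 2rσ²). Then ∫_0^S e^{−ru}·(x/(σ·u^{3/2}))·φ((x+mu)/(σ√u)) du = exp(−x(m+q)/σ²)·(1 − Φ((x − qS)/(σ√S))) + exp(−x(m−q)/σ²)·(1 − Φ((x + qS)/(σ√S))). Equivalently, with I(x) := ∫_0^S e^{−ru}·∂/∂u(1 − π(u,x)) du, one has I(x) = exp(−x(m+q)/σ²)·(Φ((x − qS)/(σ√S)) − 1) + exp(−x(m−q)/σ²)·(Φ((x + qS)/(σ√S)) − 1). -/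

import Mathlib

open MeasureTheory Real Set

/-- The standard normal density. -/
noncomputable def phi (x : ℝ) : ℝ := (Real.sqrt (2 * Real.pi))⁻¹ * Real.exp (-x ^ 2 / 2)

/-- The standard normal cumulative distribution function. -/
noncomputable def Phi (x : ℝ) : ℝ := ∫ u in Set.Iio x, phi u

/-!
Completing the square with `q² = m² + 2rσ²` gives
`e^{-x(m ∓ q)/σ²} φ((x ± qu)/(σ√u)) = e^{-ru} φ((x + mu)/(σ√u))`, so the right-hand side, as a
function of `S`, has the integrand as its derivative. Both arguments of `Φ` tend to `+∞` as
`S → 0⁺`, so it vanishes there, and since the integrand is nonnegative it is integrable on `(0, S]`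
and the fundamental theorem of calculus applies.
-/

open Filter Topology ProbabilityTheory

theorem integral_eq_sub_of_hasDerivAt_of_tendsto_of_nonneg {f f' : ℝ → ℝ} {a b fa : ℝ}
    (hab : a < b) (hderiv : ∀ x ∈ Ioc a b, HasDerivAt f (f' x) x)
    (hf' : ∀ x ∈ Ioo a b, 0 ≤ f' x) (ha : Tendsto f (𝓝[>] a) (𝓝 fa)) :
    ∫ y in a..b, f' y = f b - fa := by
  classical
  set F := Function.update f a fa
  have hF : ∀ x ∈ Ioc a b, F =ᶠ[𝓝 x] f := fun x hx =>
    (eventually_ne_nhds hx.1.ne').mono fun y hy => Function.update_of_ne hy _ _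
  have hFderiv : ∀ x ∈ Ioo a b, HasDerivAt F (f' x) x := fun x hx =>
    (hderiv x (Ioo_subset_Ioc_self hx)).congr_of_eventuallyEq (hF x (Ioo_subset_Ioc_self hx))
  have hFcont : ContinuousOn F (Icc a b) := by
    intro x hx
    rcases hx.1.eq_or_lt with rfl | hax
    · exact continuousWithinAt_update_same.2 <| ha.mono_left <| nhdsWithin_mono _
        fun y hy => lt_of_le_of_ne hy.1.1 (Ne.symm hy.2)
    · exact ((hderiv x ⟨hax, hx.2⟩).continuousAt.congr
        (hF x ⟨hax, hx.2⟩).symm).continuousWithinAt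
  have hint : IntervalIntegrable f' volume a b :=
    (intervalIntegrable_iff_integrableOn_Ioc_of_le hab.le).2
      (intervalIntegral.integrableOn_deriv_of_nonneg hFcont hFderiv hf')
  rw [intervalIntegral.integral_eq_sub_of_hasDerivAt_of_le hab.le hFcont hFderiv hint]
  simp only [F, Function.update_of_ne hab.ne', Function.update_self]

theorem phi_eq_gaussianPDFReal : phi = gaussianPDFReal 0 1 := by
  ext x; simp [phi, gaussianPDFReal]

theorem continuous_phi : Continuous phi := by
  unfold phi; fun_prop

theorem phi_nonneg (x : ℝ) : 0 ≤ phi x := by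
  unfold phi; positivity

theorem integrable_phi : Integrable phi :=
  phi_eq_gaussianPDFReal ▸ integrable_gaussianPDFReal 0 1

theorem integral_phi : ∫ u, phi u = 1 :=
  phi_eq_gaussianPDFReal ▸ integral_gaussianPDFReal_eq_one 0 one_ne_zero

theorem Phi_eq_Phi_zero_add (t : ℝ) : Phi t = Phi 0 + ∫ u in (0:ℝ)..t, phi u := by
  rw [Phi, Phi, setIntegral_congr_set Iio_ae_eq_Iic, setIntegral_congr_set Iio_ae_eq_Iic]
  rw [← intervalIntegral.integral_Iic_sub_Iic integrable_phi.integrableOn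
    integrable_phi.integrableOn]
  ring

theorem hasDerivAt_Phi (t : ℝ) : HasDerivAt Phi (phi t) t := by
  rw [funext Phi_eq_Phi_zero_add]
  exact (intervalIntegral.integral_hasDerivAt_right integrable_phi.intervalIntegrable
    continuous_phi.stronglyMeasurable.stronglyMeasurableAtFilter
    continuous_phi.continuousAt).const_add _

theorem tendsto_Phi_atTop : Tendsto Phi atTop (𝓝 1) :=
  integral_phi ▸ (aecover_Iio tendsto_id).integral_tendsto_of_countably_generated integrable_phi

theorem hasDerivAt_add_mul_div_mul_sqrt (a c : ℝ) {σ u : ℝ} (hσ : σ ≠ 0) (hu : 0 < u) :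
    HasDerivAt (fun v => (a + c * v) / (σ * √v)) ((c * u - a) / (2 * σ * (u * √u))) u := by
  have hnum : HasDerivAt (fun v => a + c * v) c u := by
    simpa using ((hasDerivAt_id u).const_mul c).const_add a
  refine (hnum.div ((hasDerivAt_sqrt hu.ne').const_mul σ) (by positivity)).congr_deriv ?_
  field_simp
  linear_combination (a + c * u) * sq_sqrt hu.le

theorem tendsto_add_mul_div_mul_sqrt_atTop {a σ : ℝ} (c : ℝ) (ha : 0 < a) (hσ : 0 < σ) :
    Tendsto (fun v => (a + c * v) / (σ * √v)) (𝓝[>] 0) atTop := by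
  have hnum : Tendsto (fun v => a + c * v) (𝓝[>] 0) (𝓝 a) :=
    ((by fun_prop : Continuous fun v : ℝ => a + c * v).tendsto' 0 a (by simp)).mono_left
      nhdsWithin_le_nhds
  have hden : Tendsto (fun v => σ * √v) (𝓝[>] 0) (𝓝[>] 0) := by
    refine tendsto_nhdsWithin_of_tendsto_nhds_of_eventually_within _ ?_ ?_
    · exact ((by fun_prop : Continuous fun v : ℝ => σ * √v).tendsto' 0 0 (by simp)).mono_left
        nhdsWithin_le_nhds
    · filter_upwards [self_mem_nhdsWithin] with v (hv : 0 < v)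
      exact mem_Ioi.2 (by positivity)
  simpa [div_eq_mul_inv] using hnum.pos_mul_atTop ha (tendsto_inv_nhdsGT_zero.comp hden)

theorem exp_mul_phi_add_mul_div {m σ r x c u : ℝ} (hσ : σ ≠ 0) (hu : 0 < u)
    (hc : c ^ 2 = m ^ 2 + 2 * r * σ ^ 2) :
    exp (-x * (m - c) / σ ^ 2) * phi ((x + c * u) / (σ * √u))
      = exp (-r * u) * phi ((x + m * u) / (σ * √u)) := by
  have hexp : -x * (m - c) / σ ^ 2 + -((x + c * u) / (σ * √u)) ^ 2 / 2
      = -r * u + -((x + m * u) / (σ * √u)) ^ 2 / 2 := by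
    rw [div_pow, div_pow, mul_pow, sq_sqrt hu.le]
    field_simp
    linear_combination (-u ^ 2) * hc
  simp only [phi]
  rw [mul_left_comm, ← exp_add, hexp, exp_add, mul_left_comm]

/-- `E[e^{-rτ}; τ ≤ S]`, where `τ` is the time the drifted Brownian motion started at `x` first
hits `0` and `q = √(m² + 2rσ²)`. -/
noncomputable def discountedHitProb (m σ x q S : ℝ) : ℝ :=
  exp (-x * (m + q) / σ ^ 2) * (1 - Phi ((x - q * S) / (σ * √S)))
    + exp (-x * (m - q) / σ ^ 2) * (1 - Phi ((x + q * S) / (σ * √S)))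

theorem discountedHitProb_eq_add_neg_mul (m σ x q : ℝ) :
    discountedHitProb m σ x q = fun v => exp (-x * (m + q) / σ ^ 2)
      * (1 - Phi ((x + -q * v) / (σ * √v)))
      + exp (-x * (m - q) / σ ^ 2) * (1 - Phi ((x + q * v) / (σ * √v))) := by
  funext v
  rw [discountedHitProb, neg_mul q v, ← sub_eq_add_neg x]

theorem hasDerivAt_discountedHitProb {m σ r x q u : ℝ} (hσ : σ ≠ 0) (hu : 0 < u)
    (hq : q ^ 2 = m ^ 2 + 2 * r * σ ^ 2) :
    HasDerivAt (discountedHitProb m σ x q)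
      (exp (-r * u) * (x / (σ * u ^ ((3 : ℝ) / 2))) * phi ((x + m * u) / (σ * √u))) u := by
  have hminus := (hasDerivAt_Phi _).comp u (hasDerivAt_add_mul_div_mul_sqrt x (-q) hσ hu)
  have hplus := (hasDerivAt_Phi _).comp u (hasDerivAt_add_mul_div_mul_sqrt x q hσ hu)
  have key_minus := exp_mul_phi_add_mul_div (m := m) (r := r) (x := x) (c := -q) hσ hu
    (by rw [neg_sq, hq])
  have key_plus := exp_mul_phi_add_mul_div (m := m) (r := r) (x := x) hσ hu hq
  rw [sub_neg_eq_add] at key_minus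
  have h32 : u ^ ((3 : ℝ) / 2) = u * √u := by
    rw [show (3 : ℝ) / 2 = 1 + 1 / 2 by norm_num, rpow_add hu, rpow_one, ← sqrt_eq_rpow]
  rw [discountedHitProb_eq_add_neg_mul]
  refine (((hminus.const_sub 1).const_mul (exp (-x * (m + q) / σ ^ 2))).add
    ((hplus.const_sub 1).const_mul (exp (-x * (m - q) / σ ^ 2)))).congr_deriv ?_
  rw [h32]
  linear_combination (-(-q * u - x) / (2 * σ * (u * √u))) * key_minus
    + (-(q * u - x) / (2 * σ * (u * √u))) * key_plus

theorem tendsto_discountedHitProb_nhdsGT_zero {m σ x q : ℝ} (hσ : 0 < σ) (hx : 0 < x) :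
    Tendsto (discountedHitProb m σ x q) (𝓝[>] 0) (𝓝 0) := by
  have hminus := tendsto_Phi_atTop.comp (tendsto_add_mul_div_mul_sqrt_atTop (-q) hx hσ)
  have hplus := tendsto_Phi_atTop.comp (tendsto_add_mul_div_mul_sqrt_atTop q hx hσ)
  rw [discountedHitProb_eq_add_neg_mul]
  simpa using
    ((tendsto_const_nhds (x := (1 : ℝ)).sub hminus).const_mul (exp (-x * (m + q) / σ ^ 2))).add
      ((tendsto_const_nhds (x := (1 : ℝ)).sub hplus).const_mul (exp (-x * (m - q) / σ ^ 2)))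

/-- Let `m ∈ ℝ`, `σ > 0`, `r > 0`, `x > 0`, `S > 0` and set `q := √(m² + 2rσ²)`. Then
`∫_0^S e^{−ru}·(x/(σ·u^{3/2}))·φ((x+mu)/(σ√u)) du
  = exp(−x(m+q)/σ²)·(1 − Φ((x − qS)/(σ√S))) + exp(−x(m−q)/σ²)·(1 − Φ((x + qS)/(σ√S)))`. -/
theorem stmt_3 (m σ r x S : ℝ) (hσ : 0 < σ) (hr : 0 < r) (hx : 0 < x) (hS : 0 < S)
    (q : ℝ) (hq : q = Real.sqrt (m ^ 2 + 2 * r * σ ^ 2)) :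
    (∫ u in (0:ℝ)..S,
        Real.exp (-r * u) * (x / (σ * u ^ ((3 : ℝ) / 2))) * phi ((x + m * u) / (σ * Real.sqrt u)))
      = Real.exp (-x * (m + q) / σ ^ 2) * (1 - Phi ((x - q * S) / (σ * Real.sqrt S)))
        + Real.exp (-x * (m - q) / σ ^ 2) * (1 - Phi ((x + q * S) / (σ * Real.sqrt S))) := by
  have hq2 : q ^ 2 = m ^ 2 + 2 * r * σ ^ 2 := hq ▸ sq_sqrt (by positivity)
  have hdensity_nonneg : ∀ u ∈ Ioo 0 S,
      0 ≤ exp (-r * u) * (x / (σ * u ^ ((3 : ℝ) / 2))) * phi ((x + m * u) / (σ * √u)) :=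
    fun u ⟨hu, _⟩ => mul_nonneg (by positivity) (phi_nonneg _)
  rw [integral_eq_sub_of_hasDerivAt_of_tendsto_of_nonneg hS
    (fun u hu => hasDerivAt_discountedHitProb hσ.ne' hu.1 hq2) hdensity_nonneg
    (tendsto_discountedHitProb_nhdsGT_zero hσ hx), sub_zero]
  rfl
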